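/- arXiv:1309.6085 — 3 statements merged into one kernel-verified Lean document; each statement's English description precedes it below -/
import Mathlib

section
/- An operator T : ℝⁿ → ℝᵐ is an abstract Uryson operator (orthogonally additive and order bounded) if and only if there exist functions T_{i,j} : ℝ → ℝ with T_{i,j}(0) = 0 for 1 ≤ i ≤ m, 1 ≤ j ≤ n, such that the i-th coordinate of T(x₁,…,xₙ) equals Σⱼ T_{i,j}(xⱼ) for all x ∈ ℝⁿ, and moreover T maps order bounded sets to order bounded sets. -/
/-- Orthogonal additivity: `T (x + y) = T x + T y` whenever `|x| ⊓ |y| = 0`. -/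
def OrthAdd {E F : Type*} [Lattice E] [AddCommGroup E] [AddCommGroup F]
    (T : E → F) : Prop :=
  ∀ x y : E, |x| ⊓ |y| = 0 → T (x + y) = T x + T y

/-- `T` maps order bounded sets to order bounded sets. -/
def OrderBoundedMap {E F : Type*} [Preorder E] [Preorder F] (T : E → F) : Prop :=
  ∀ a b : E, ∃ c d : F, ∀ x ∈ Set.Icc a b, T x ∈ Set.Icc c d

/-- An abstract Uryson operator: orthogonally additive and order bounded. -/
def Uryson {E F : Type*} [Lattice E] [AddCommGroup E] [Lattice F] [AddCommGroup F]
    (T : E → F) : Prop :=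
  OrthAdd T ∧ OrderBoundedMap T

/-!
In `ι → α` with `α` linearly ordered, `|x| ⊓ |y| = 0` means that at every coordinate one of
`x`, `y` vanishes. Hence an orthogonally additive `T` splits `x = ∑ⱼ Pi.single j (x j)` into
`T x = ∑ⱼ T (Pi.single j (x j))`, which gives `Tᵢⱼ t = T (Pi.single j t) i`; conversely a sum
of coordinate functions vanishing at `0` is orthogonally additive, coordinate by coordinate.
-/

theorem OrthAdd.map_zero {E F : Type*} [Lattice E] [AddCommGroup E] [AddCommGroup F]
    {T : E → F} (hT : OrthAdd T) : T 0 = 0 := by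
  simpa using (hT 0 0 (by simp [abs])).symm

section

variable {ι α : Type*} [AddCommGroup α] [LinearOrder α] [IsOrderedAddMonoid α]

theorem abs_inf_abs_eq_zero_iff {a b : α} : |a| ⊓ |b| = 0 ↔ a = 0 ∨ b = 0 := by
  rw [← abs_eq_zero (a := a), ← abs_eq_zero (a := b)]
  rcases le_total |a| |b| with h | h
  · rw [inf_eq_left.mpr h]
    exact ⟨Or.inl, by rintro (h' | h') <;> [exact h'; exact le_antisymm (h' ▸ h) (abs_nonneg a)]⟩
  · rw [inf_eq_right.mpr h]
    exact ⟨Or.inr, by rintro (h' | h') <;> [exact le_antisymm (h' ▸ h) (abs_nonneg b); exact h']⟩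

theorem Pi.abs_inf_abs_eq_zero_iff {x y : ι → α} :
    |x| ⊓ |y| = 0 ↔ ∀ j, x j = 0 ∨ y j = 0 := by
  simp only [funext_iff, Pi.inf_apply, Pi.abs_apply, Pi.zero_apply, _root_.abs_inf_abs_eq_zero_iff]

variable [Fintype ι] {F : Type*} [AddCommGroup F]

theorem orthAdd_sum_apply {S : ι → α → F} (hS : ∀ j, S j 0 = 0) :
    OrthAdd fun x : ι → α => ∑ j, S j (x j) := by
  intro x y hxy
  rw [← Finset.sum_add_distrib]
  refine Finset.sum_congr rfl fun j _ => ?_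
  rcases Pi.abs_inf_abs_eq_zero_iff.mp hxy j with h | h <;> simp [h, hS]

theorem OrthAdd.map_eq_sum_single [DecidableEq ι] {T : (ι → α) → F} (hT : OrthAdd T)
    (x : ι → α) : T x = ∑ j, T (Pi.single j (x j)) := by
  suffices ∀ s : Finset ι, T (∑ j ∈ s, Pi.single j (x j)) = ∑ j ∈ s, T (Pi.single j (x j)) by
    rw [← this, Finset.univ_sum_single]
  intro s
  induction s using Finset.induction with
  | empty => simpa using hT.map_zero
  | insert a s ha ih =>
    rw [Finset.sum_insert ha, Finset.sum_insert ha, ← ih]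
    refine hT _ _ (Pi.abs_inf_abs_eq_zero_iff.mpr fun k => ?_)
    rcases eq_or_ne k a with rfl | hk
    · exact Or.inr (by simp [Finset.sum_apply, Pi.single_apply, ha])
    · exact Or.inl (Pi.single_eq_of_ne hk _)

end

/-- `T : ℝⁿ → ℝᵐ` (with coordinatewise order) is an abstract Uryson operator iff there
are functions `Tᵢⱼ : ℝ → ℝ` with `Tᵢⱼ 0 = 0` such that the `i`-th coordinate of `T x`
is `∑ⱼ Tᵢⱼ (xⱼ)`, and moreover `T` maps order bounded sets to order bounded sets. -/
theorem stmt2 (n m : ℕ) (T : (Fin n → ℝ) → (Fin m → ℝ)) :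
    Uryson T ↔
      ((∃ Tij : Fin m → Fin n → ℝ → ℝ,
          (∀ i j, Tij i j 0 = 0) ∧
          ∀ (x : Fin n → ℝ) (i : Fin m), T x i = ∑ j, Tij i j (x j)) ∧
        OrderBoundedMap T) := by
  refine ⟨fun ⟨hT, hbd⟩ => ⟨⟨fun i j t => T (Pi.single j t) i, fun i j => ?_, fun x i => ?_⟩, hbd⟩,
    fun ⟨⟨S, hS0, hS⟩, hbd⟩ => ⟨?_, hbd⟩⟩
  · simp [hT.map_zero]
  · rw [hT.map_eq_sum_single x, Finset.sum_apply]
  · have hT : T = fun x => ∑ j, fun i => S i j (x j) := by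
      ext x i
      rw [hS, Finset.sum_apply]
    rw [hT]
    exact orthAdd_sum_apply (S := fun j t i => S i j t) fun j => funext fun i => hS0 i j
end

section
/- Let E, F be vector lattices with F Dedekind complete. Two positive abstract Uryson operators T, S : E → F are disjoint in U(E,F) if and only if for every e ∈ E and every ε > 0 there exist a family (ρ_α) of pairwise disjoint band projections on F with sup ρ_α = Id (a partition of unity) and a family (e_α) of fragments of e such that ρ_α T e_α ≤ ε Te and ρ_α S(e − e_α) ≤ ε Se for all α. -/
/-- `z` is a fragment (component) of `x`: `z ⊥ (x - z)`. -/
def Fragment {E : Type*} [Lattice E] [AddCommGroup E] (z x : E) : Prop :=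
  |z| ⊓ |x - z| = 0

/-- A band (order) projection on a Dedekind complete vector lattice `F`:
additive, idempotent, and `0 ≤ ρ x ≤ x` for all `x ≥ 0`. -/
def IsBandProj {F : Type*} [Lattice F] [AddCommGroup F] (ρ : F → F) : Prop :=
  (∀ x y : F, ρ (x + y) = ρ x + ρ y) ∧ (∀ x, ρ (ρ x) = ρ x) ∧
    ∀ x : F, 0 ≤ x → 0 ≤ ρ x ∧ ρ x ≤ x

/-- Disjointness of two positive abstract Uryson operators `T, S` in `U(E,F)`:
`T ⊓ S = 0`, i.e. every abstract Uryson operator `R` with `R ≤ T` and `R ≤ S`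
(pointwise, which is the order of `U(E,F)`) satisfies `R ≤ 0`. -/
def UDisjointPos {E F : Type*} [Lattice E] [AddCommGroup E] [Lattice F] [AddCommGroup F]
    (T S : E → F) : Prop :=
  ∀ R : E → F, Uryson R → (∀ x, R x ≤ T x) → (∀ x, R x ≤ S x) → ∀ x, R x ≤ 0

section Disjoint

variable {α : Type*} [Lattice α] [Zero α] {a b a' b' : α}

theorem nonneg_of_inf_eq_zero_left (h : a ⊓ b = 0) : 0 ≤ a := h ▸ inf_le_left

theorem nonneg_of_inf_eq_zero_right (h : a ⊓ b = 0) : 0 ≤ b := h ▸ inf_le_right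

theorem inf_eq_zero_of_le (h : a ⊓ b = 0) (ha : a' ≤ a) (hb : b' ≤ b) (ha₀ : 0 ≤ a')
    (hb₀ : 0 ≤ b') : a' ⊓ b' = 0 :=
  le_antisymm ((inf_le_inf ha hb).trans h.le) (le_inf ha₀ hb₀)

end Disjoint

section LatticeOrderedGroup

variable {α : Type*} [Lattice α] [AddCommGroup α] [IsOrderedAddMonoid α] {a b c d : α}

theorem inf_add_le_inf_add_inf (ha : 0 ≤ a) (hb : 0 ≤ b) (hc : 0 ≤ c) :
    a ⊓ (b + c) ≤ a ⊓ b + a ⊓ c := by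
  rw [inf_add, add_inf, add_inf]
  exact le_inf (le_inf (inf_le_left.trans (le_add_of_nonneg_left ha))
    (inf_le_left.trans (le_add_of_nonneg_right hc)))
    (le_inf (inf_le_left.trans (le_add_of_nonneg_left hb)) inf_le_right)

theorem inf_add_eq_zero (hab : a ⊓ b = 0) (hac : a ⊓ c = 0) : a ⊓ (b + c) = 0 := by
  have hb := nonneg_of_inf_eq_zero_right hab
  have hc := nonneg_of_inf_eq_zero_right hac
  refine le_antisymm ?_ (le_inf (nonneg_of_inf_eq_zero_left hab) (add_nonneg hb hc))
  calc a ⊓ (b + c) ≤ a ⊓ b + a ⊓ c :=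
        inf_add_le_inf_add_inf (nonneg_of_inf_eq_zero_left hab) hb hc
    _ = 0 := by rw [hab, hac, add_zero]

theorem add_inf_add_eq_zero (hac : a ⊓ c = 0) (had : a ⊓ d = 0) (hbc : b ⊓ c = 0)
    (hbd : b ⊓ d = 0) : (a + b) ⊓ (c + d) = 0 := by
  rw [inf_comm]
  exact inf_add_eq_zero (inf_comm a _ ▸ inf_add_eq_zero hac had)
    (inf_comm b _ ▸ inf_add_eq_zero hbc hbd)

theorem inf_nsmul_eq_zero (h : a ⊓ b = 0) (n : ℕ) : a ⊓ n • b = 0 := by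
  induction n with
  | zero => rw [zero_smul, inf_eq_right.2 (nonneg_of_inf_eq_zero_left h)]
  | succ n ih => rw [succ_nsmul]; exact inf_add_eq_zero ih h

theorem add_eq_sup_of_inf_eq_zero (h : a ⊓ b = 0) : a + b = a ⊔ b := by
  rw [← inf_add_sup a b, h, zero_add]

theorem eq_inf_add_inf_of_le_add (ha : 0 ≤ a) (habc : a ≤ b + c) (hbc : b ⊓ c = 0) :
    a = a ⊓ b + a ⊓ c := by
  have hb := nonneg_of_inf_eq_zero_left hbc
  have hc := nonneg_of_inf_eq_zero_right hbc
  refine le_antisymm ?_ ?_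
  · calc a = a ⊓ (b + c) := (inf_eq_left.2 habc).symm
      _ ≤ a ⊓ b + a ⊓ c := inf_add_le_inf_add_inf ha hb hc
  · rw [add_eq_sup_of_inf_eq_zero (inf_eq_zero_of_le hbc inf_le_right inf_le_right
      (le_inf ha hb) (le_inf ha hc))]
    exact sup_le inf_le_left inf_le_left

theorem posPart_sub_of_inf_eq_zero (h : a ⊓ b = 0) : (a - b)⁺ = a := by
  rw [posPart_def, ← sub_self b, ← sup_sub, ← add_eq_sup_of_inf_eq_zero h, add_sub_cancel_right]

theorem posPart_le_abs (a : α) : a⁺ ≤ |a| := sup_le (le_abs_self a) (abs_nonneg a)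

theorem negPart_le_abs (a : α) : a⁻ ≤ |a| := sup_le (neg_le_abs a) (abs_nonneg a)

theorem abs_sub_le_add_of_nonneg (ha : 0 ≤ a) (hb : 0 ≤ b) : |a - b| ≤ a + b := by
  simpa [sub_eq_add_neg, abs_of_nonneg ha, abs_of_nonneg hb] using abs_add_le a (-b)

theorem posPart_add_of_abs_inf_abs_eq_zero (h : |a| ⊓ |b| = 0) : (a + b)⁺ = a⁺ + b⁺ := by
  have hab : a⁺ ⊓ b⁻ = 0 :=
    inf_eq_zero_of_le h (posPart_le_abs a) (negPart_le_abs b) (posPart_nonneg a)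
      (negPart_nonneg b)
  have hba : b⁺ ⊓ a⁻ = 0 :=
    inf_eq_zero_of_le (inf_comm |a| _ ▸ h) (posPart_le_abs b) (negPart_le_abs a)
      (posPart_nonneg b) (negPart_nonneg a)
  have hsplit : a + b = (a⁺ + b⁺) - (a⁻ + b⁻) := by
    conv_lhs => rw [← posPart_sub_negPart a, ← posPart_sub_negPart b]
    abel
  rw [hsplit, posPart_sub_of_inf_eq_zero
    (add_inf_add_eq_zero (posPart_inf_negPart_eq_zero a) hab hba (posPart_inf_negPart_eq_zero b))]

theorem negPart_add_of_abs_inf_abs_eq_zero (h : |a| ⊓ |b| = 0) : (a + b)⁻ = a⁻ + b⁻ := by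
  rw [← posPart_neg, neg_add, posPart_add_of_abs_inf_abs_eq_zero (by rwa [abs_neg, abs_neg]),
    posPart_neg, posPart_neg]

theorem abs_add_of_abs_inf_abs_eq_zero (h : |a| ⊓ |b| = 0) : |a + b| = |a| + |b| := by
  rw [← posPart_add_negPart, posPart_add_of_abs_inf_abs_eq_zero h,
    negPart_add_of_abs_inf_abs_eq_zero h, ← posPart_add_negPart a, ← posPart_add_negPart b]
  abel

end LatticeOrderedGroup

section Fragment

variable {E : Type*} [Lattice E] [AddCommGroup E] [IsOrderedAddMonoid E] {x y z z₁ z₂ : E}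

theorem fragment_self (x : E) : Fragment x x := by
  rw [Fragment, sub_self, abs_zero, inf_eq_right.2 (abs_nonneg x)]

theorem fragment_zero (x : E) : Fragment 0 x := by
  rw [Fragment, abs_zero, sub_zero, inf_eq_left.2 (abs_nonneg x)]

theorem Fragment.abs_add_abs (h : Fragment z x) : |z| + |x - z| = |x| := by
  rw [← abs_add_of_abs_inf_abs_eq_zero h, add_sub_cancel]

theorem Fragment.abs_le (h : Fragment z x) : |z| ≤ |x| :=
  h.abs_add_abs ▸ le_add_of_nonneg_right (abs_nonneg _)

theorem Fragment.abs_sub_le (h : Fragment z x) : |x - z| ≤ |x| :=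
  h.abs_add_abs ▸ le_add_of_nonneg_left (abs_nonneg _)

theorem Fragment.abs_inf_abs_eq_zero (hxy : |x| ⊓ |y| = 0) (h₁ : Fragment z₁ x)
    (h₂ : Fragment z₂ y) : |z₁| ⊓ |z₂| = 0 ∧ |x - z₁| ⊓ |y - z₂| = 0 :=
  ⟨inf_eq_zero_of_le hxy h₁.abs_le h₂.abs_le (abs_nonneg _) (abs_nonneg _),
    inf_eq_zero_of_le hxy h₁.abs_sub_le h₂.abs_sub_le (abs_nonneg _) (abs_nonneg _)⟩

theorem Fragment.add (hxy : |x| ⊓ |y| = 0) (h₁ : Fragment z₁ x) (h₂ : Fragment z₂ y) :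
    Fragment (z₁ + z₂) (x + y) := by
  have h₁₂ : |z₁| ⊓ |y - z₂| = 0 :=
    inf_eq_zero_of_le hxy h₁.abs_le h₂.abs_sub_le (abs_nonneg _) (abs_nonneg _)
  have h₂₁ : |z₂| ⊓ |x - z₁| = 0 :=
    inf_eq_zero_of_le (inf_comm |x| _ ▸ hxy) h₂.abs_le h₁.abs_sub_le (abs_nonneg _)
      (abs_nonneg _)
  have hsub : x + y - (z₁ + z₂) = (x - z₁) + (y - z₂) := by abel
  refine inf_eq_zero_of_le (add_inf_add_eq_zero h₁ h₁₂ h₂₁ h₂) (abs_add_le _ _)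
    (hsub ▸ abs_add_le _ _) (abs_nonneg _) (abs_nonneg _)

theorem Fragment.posPart_add_posPart (h : Fragment z x) : z⁺ + (x - z)⁺ = x⁺ := by
  rw [← posPart_add_of_abs_inf_abs_eq_zero h, add_sub_cancel]

theorem Fragment.negPart_add_negPart (h : Fragment z x) : z⁻ + (x - z)⁻ = x⁻ := by
  rw [← negPart_add_of_abs_inf_abs_eq_zero h, add_sub_cancel]

theorem fragment_posPart_inf_sub_negPart_inf (hxy : |x| ⊓ |y| = 0) (hz : Fragment z (x + y)) :
    Fragment (z⁺ ⊓ x⁺ - z⁻ ⊓ x⁻) x := by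
  set w := x + y - z
  have hzw : |z| ⊓ |w| = 0 := hz
  have hxp : x⁺ = x⁺ ⊓ z⁺ + x⁺ ⊓ w⁺ := by
    refine eq_inf_add_inf_of_le_add (posPart_nonneg x) ?_
      (inf_eq_zero_of_le hzw (posPart_le_abs z) (posPart_le_abs w) (posPart_nonneg z)
        (posPart_nonneg w))
    rw [hz.posPart_add_posPart, posPart_add_of_abs_inf_abs_eq_zero hxy]
    exact le_add_of_nonneg_right (posPart_nonneg y)
  have hxn : x⁻ = x⁻ ⊓ z⁻ + x⁻ ⊓ w⁻ := by
    refine eq_inf_add_inf_of_le_add (negPart_nonneg x) ?_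
      (inf_eq_zero_of_le hzw (negPart_le_abs z) (negPart_le_abs w) (negPart_nonneg z)
        (negPart_nonneg w))
    rw [hz.negPart_add_negPart, negPart_add_of_abs_inf_abs_eq_zero hxy]
    exact le_add_of_nonneg_right (negPart_nonneg y)
  have hsub : x - (z⁺ ⊓ x⁺ - z⁻ ⊓ x⁻) = x⁺ ⊓ w⁺ - x⁻ ⊓ w⁻ := by
    calc x - (z⁺ ⊓ x⁺ - z⁻ ⊓ x⁻)
        = (x⁺ ⊓ z⁺ + x⁺ ⊓ w⁺) - (x⁻ ⊓ z⁻ + x⁻ ⊓ w⁻) - (z⁺ ⊓ x⁺ - z⁻ ⊓ x⁻) := by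
          rw [← hxp, ← hxn, posPart_sub_negPart]
      _ = x⁺ ⊓ w⁺ - x⁻ ⊓ w⁻ := by rw [inf_comm x⁺, inf_comm x⁻]; abel
  refine inf_eq_zero_of_le hzw ?_ ?_ (abs_nonneg _) (abs_nonneg _)
  · rw [← posPart_add_negPart z]
    exact (abs_sub_le_add_of_nonneg (le_inf (posPart_nonneg z) (posPart_nonneg x))
      (le_inf (negPart_nonneg z) (negPart_nonneg x))).trans
      (add_le_add inf_le_left inf_le_left)
  · rw [hsub, ← posPart_add_negPart w]
    exact (abs_sub_le_add_of_nonneg (le_inf (posPart_nonneg x) (posPart_nonneg w))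
      (le_inf (negPart_nonneg x) (negPart_nonneg w))).trans
      (add_le_add inf_le_right inf_le_right)

theorem Fragment.exists_add (hxy : |x| ⊓ |y| = 0) (hz : Fragment z (x + y)) :
    ∃ z₁ z₂, Fragment z₁ x ∧ Fragment z₂ y ∧ z = z₁ + z₂ := by
  refine ⟨_, _, fragment_posPart_inf_sub_negPart_inf hxy hz,
    fragment_posPart_inf_sub_negPart_inf (inf_comm |x| _ ▸ hxy) (add_comm x y ▸ hz), ?_⟩
  have hzp : z⁺ = z⁺ ⊓ x⁺ + z⁺ ⊓ y⁺ := by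
    refine eq_inf_add_inf_of_le_add (posPart_nonneg z) ?_
      (inf_eq_zero_of_le hxy (posPart_le_abs x) (posPart_le_abs y) (posPart_nonneg x)
        (posPart_nonneg y))
    rw [← posPart_add_of_abs_inf_abs_eq_zero hxy, ← hz.posPart_add_posPart]
    exact le_add_of_nonneg_right (posPart_nonneg _)
  have hzn : z⁻ = z⁻ ⊓ x⁻ + z⁻ ⊓ y⁻ := by
    refine eq_inf_add_inf_of_le_add (negPart_nonneg z) ?_
      (inf_eq_zero_of_le hxy (negPart_le_abs x) (negPart_le_abs y) (negPart_nonneg x)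
        (negPart_nonneg y))
    rw [← negPart_add_of_abs_inf_abs_eq_zero hxy, ← hz.negPart_add_negPart]
    exact le_add_of_nonneg_right (negPart_nonneg _)
  calc z = (z⁺ ⊓ x⁺ + z⁺ ⊓ y⁺) - (z⁻ ⊓ x⁻ + z⁻ ⊓ y⁻) := by
        rw [← hzp, ← hzn, posPart_sub_negPart]
    _ = _ := by abel

end Fragment

section BandProjPos

variable {F : Type*} [ConditionallyCompleteLattice F] [AddCommGroup F] {b c d g u v x y : F}

/-- On the positive cone, the projection onto the band generated by `b`. -/
noncomputable def bandProjPos (b x : F) : F := ⨆ n : ℕ, x ⊓ n • b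

noncomputable def bandProj (b x : F) : F := bandProjPos b x⁺ - bandProjPos b x⁻

theorem bddAbove_range_inf_nsmul (b x : F) : BddAbove (Set.range fun n : ℕ => x ⊓ n • b) :=
  ⟨x, by rintro _ ⟨n, rfl⟩; exact inf_le_left⟩

theorem inf_nsmul_le_bandProjPos (b x : F) (n : ℕ) : x ⊓ n • b ≤ bandProjPos b x :=
  le_ciSup (bddAbove_range_inf_nsmul b x) n

theorem bandProjPos_le (b x : F) : bandProjPos b x ≤ x := ciSup_le fun _ => inf_le_left

theorem bandProjPos_nonneg (hx : 0 ≤ x) : 0 ≤ bandProjPos b x := by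
  simpa [inf_eq_right.2 hx] using inf_nsmul_le_bandProjPos b x 0

theorem bandProjPos_mono_right (hxy : x ≤ y) : bandProjPos b x ≤ bandProjPos b y :=
  ciSup_le fun n => (inf_le_inf_right _ hxy).trans (inf_nsmul_le_bandProjPos b y n)

theorem bandProjPos_idem (b x : F) : bandProjPos b (bandProjPos b x) = bandProjPos b x :=
  le_antisymm (bandProjPos_le _ _) <| ciSup_le fun n =>
    (le_inf (inf_nsmul_le_bandProjPos b x n) inf_le_right).trans
      (inf_nsmul_le_bandProjPos _ _ n)

variable [IsOrderedAddMonoid F]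

theorem nonpos_of_forall_nsmul_le (h : ∀ n : ℕ, n • x ≤ y) : x ≤ 0 := by
  have hbdd : BddAbove (Set.range fun n : ℕ => n • x) := ⟨y, by rintro _ ⟨n, rfl⟩; exact h n⟩
  have hsup : (⨆ n : ℕ, n • x) + x ≤ ⨆ n : ℕ, n • x :=
    ciSup_add_le fun n => (succ_nsmul x n).symm ▸ le_ciSup hbdd (n + 1)
  simpa using hsup

theorem eq_zero_of_le_ciSup_of_inf_eq_zero {ι : Sort*} [Nonempty ι] {f : ι → F}
    (hf : BddAbove (Set.range f)) (hv : 0 ≤ v) (hle : v ≤ ⨆ i, f i) (h : ∀ i, v ⊓ f i = 0) :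
    v = 0 := by
  have hsup : (⨆ i, f i) + v ≤ ⨆ i, f i := ciSup_add_le fun i => by
    rw [add_eq_sup_of_inf_eq_zero (inf_comm v (f i) ▸ h i)]
    exact sup_le (le_ciSup hf i) hle
  exact le_antisymm (by simpa using hsup) hv

theorem bandProjPos_mono_left (hbc : b ≤ c) : bandProjPos b x ≤ bandProjPos c x :=
  ciSup_le fun n =>
    (inf_le_inf_left x (nsmul_le_nsmul_right hbc n)).trans (inf_nsmul_le_bandProjPos c x n)

theorem bandProjPos_eq_self_of_le_left (hbc : b ≤ c) (hx : bandProjPos b x = x) :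
    bandProjPos c x = x :=
  le_antisymm (bandProjPos_le c x) (hx.ge.trans (bandProjPos_mono_left hbc))

theorem bandProjPos_add (hb : 0 ≤ b) (hx : 0 ≤ x) (hy : 0 ≤ y) :
    bandProjPos b (x + y) = bandProjPos b x + bandProjPos b y := by
  refine le_antisymm (ciSup_le fun n => ?_) (ciSup_add_ciSup_le fun n m => ?_)
  · calc (x + y) ⊓ n • b ≤ n • b ⊓ x + n • b ⊓ y := by
          rw [inf_comm]; exact inf_add_le_inf_add_inf (nsmul_nonneg hb n) hx hy
      _ ≤ bandProjPos b x + bandProjPos b y := by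
          rw [inf_comm, inf_comm _ y]
          exact add_le_add (inf_nsmul_le_bandProjPos b x n) (inf_nsmul_le_bandProjPos b y n)
  · calc x ⊓ n • b + y ⊓ m • b ≤ (x + y) ⊓ (n + m) • b := by
          rw [add_nsmul]
          exact le_inf (add_le_add inf_le_left inf_le_left) (add_le_add inf_le_right inf_le_right)
      _ ≤ bandProjPos b (x + y) := inf_nsmul_le_bandProjPos b _ _

theorem bandProjPos_add_le (hx : 0 ≤ x) (hb : 0 ≤ b) (hc : 0 ≤ c) :
    bandProjPos (b + c) x ≤ bandProjPos b x + bandProjPos c x :=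
  ciSup_le fun n => by
    rw [smul_add]
    exact (inf_add_le_inf_add_inf hx (nsmul_nonneg hb n) (nsmul_nonneg hc n)).trans
      (add_le_add (inf_nsmul_le_bandProjPos b x n) (inf_nsmul_le_bandProjPos c x n))

theorem bandProjPos_eq_zero (h : x ⊓ b = 0) : bandProjPos b x = 0 :=
  le_antisymm (ciSup_le fun n => (inf_nsmul_eq_zero h n).le)
    (bandProjPos_nonneg (nonneg_of_inf_eq_zero_left h))

theorem sub_bandProjPos_inf_eq_zero (hb : 0 ≤ b) :
    (x - bandProjPos b x) ⊓ b = 0 := by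
  have hsup : bandProjPos b x + (x - bandProjPos b x) ⊓ b ≤ bandProjPos b x :=
    ciSup_add_le fun n => calc
      x ⊓ n • b + (x - bandProjPos b x) ⊓ b ≤ x ⊓ (n + 1) • b := by
        refine le_inf ?_ (succ_nsmul b n ▸ add_le_add inf_le_right inf_le_right)
        calc x ⊓ n • b + (x - bandProjPos b x) ⊓ b
            ≤ bandProjPos b x + (x - bandProjPos b x) :=
              add_le_add (inf_nsmul_le_bandProjPos b x n) inf_le_left
          _ = x := add_sub_cancel _ _
      _ ≤ bandProjPos b x := inf_nsmul_le_bandProjPos b x _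
  exact le_antisymm (by simpa using hsup) (le_inf (sub_nonneg.2 (bandProjPos_le b x)) hb)

theorem inf_eq_zero_of_bandProjPos_eq (hx : 0 ≤ x) (hy : y ⊓ b = 0)
    (hxb : bandProjPos b x = x) : y ⊓ x = 0 := by
  have hyx : 0 ≤ y ⊓ x := le_inf (nonneg_of_inf_eq_zero_left hy) hx
  refine eq_zero_of_le_ciSup_of_inf_eq_zero (bddAbove_range_inf_nsmul b x) hyx
    (inf_le_right.trans hxb.ge) fun n => ?_
  exact inf_eq_zero_of_le (inf_nsmul_eq_zero hy n) inf_le_left inf_le_right hyx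
    (le_inf hx (nsmul_nonneg (nonneg_of_inf_eq_zero_right hy) n))

theorem eq_zero_of_inf_eq_zero_of_bandProjPos_eq (hx : 0 ≤ x) (h : x ⊓ b = 0)
    (hxb : bandProjPos b x = x) : x = 0 := by
  simpa using inf_eq_zero_of_bandProjPos_eq hx h hxb

theorem bandProjPos_eq_self_of_le_right (hb : 0 ≤ b) (hy : 0 ≤ y) (hyx : y ≤ x)
    (hx : bandProjPos b x = x) : bandProjPos b y = y := by
  have hperp : (y - bandProjPos b y) ⊓ x = 0 :=
    inf_eq_zero_of_bandProjPos_eq (hy.trans hyx) (sub_bandProjPos_inf_eq_zero hb) hx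
  have hle : y - bandProjPos b y ≤ x := (sub_le_self _ (bandProjPos_nonneg hy)).trans hyx
  rw [inf_eq_left.2 hle, sub_eq_zero] at hperp
  exact hperp.symm

theorem bandProjPos_inf_bandProjPos_eq_zero (hbc : b ⊓ c = 0) (hx : 0 ≤ x) :
    bandProjPos b x ⊓ bandProjPos c x = 0 := by
  have hcb : c ⊓ bandProjPos b x = 0 :=
    inf_eq_zero_of_bandProjPos_eq (bandProjPos_nonneg hx) (inf_comm b c ▸ hbc)
      (bandProjPos_idem b x)
  exact inf_eq_zero_of_bandProjPos_eq (bandProjPos_nonneg hx) (inf_comm c _ ▸ hcb)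
    (bandProjPos_idem c x)

theorem exists_add_of_bandProjPos_sup_eq {p q : F} (hp : 0 ≤ p) (hq : 0 ≤ q) (hd : 0 ≤ d)
    (h : bandProjPos (p ⊔ q) d = d) :
    ∃ d₁ d₂, 0 ≤ d₁ ∧ 0 ≤ d₂ ∧ d = d₁ + d₂ ∧
      bandProjPos p d₁ = d₁ ∧ bandProjPos q d₂ = d₂ := by
  set d₂ := d - bandProjPos p d
  have hd₂ : 0 ≤ d₂ := sub_nonneg.2 (bandProjPos_le p d)
  have hd₂d : d₂ ≤ d := sub_le_self _ (bandProjPos_nonneg hd)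
  have hpq : 0 ≤ p ⊔ q := le_sup_of_le_left hp
  refine ⟨bandProjPos p d, d₂, bandProjPos_nonneg hd, hd₂, (add_sub_cancel _ _).symm,
    bandProjPos_idem p d, ?_⟩
  set v := d₂ - bandProjPos q d₂
  have hv : 0 ≤ v := sub_nonneg.2 (bandProjPos_le q d₂)
  have hvd₂ : v ≤ d₂ := sub_le_self _ (bandProjPos_nonneg hd₂)
  have hvp : v ⊓ p = 0 :=
    inf_eq_zero_of_le (sub_bandProjPos_inf_eq_zero hp) hvd₂ le_rfl hv hp
  have hvpq : v ⊓ (p ⊔ q) = 0 :=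
    inf_eq_zero_of_le (inf_add_eq_zero hvp (sub_bandProjPos_inf_eq_zero hq)) le_rfl
      (sup_le (le_add_of_nonneg_right hq) (le_add_of_nonneg_left hp)) hv hpq
  have hv0 : v = 0 := eq_zero_of_inf_eq_zero_of_bandProjPos_eq hv hvpq
    (bandProjPos_eq_self_of_le_right hpq hv (hvd₂.trans hd₂d) h)
  exact (sub_eq_zero.1 hv0).symm

theorem eq_zero_of_inf_inf_eq_zero {a : F} (hd : 0 ≤ d) (hda : bandProjPos a d = d)
    (hdb : bandProjPos b d = d) (h : d ⊓ (a ⊓ b) = 0) : d = 0 := by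
  have hy : d ⊓ a ⊓ d = 0 := inf_eq_zero_of_bandProjPos_eq hd (inf_assoc d a b ▸ h) hdb
  rw [inf_right_comm, inf_idem] at hy
  exact eq_zero_of_inf_eq_zero_of_bandProjPos_eq hd hy hda

end BandProjPos

section IsBandProj

variable {F : Type*} [Lattice F] [AddCommGroup F] {ρ : F → F} {x y : F}

theorem IsBandProj.map_sub (h : IsBandProj ρ) (x y : F) : ρ (x - y) = ρ x - ρ y :=
  _root_.map_sub (AddMonoidHom.mk' ρ h.1) x y

variable [IsOrderedAddMonoid F]

theorem IsBandProj.mono (h : IsBandProj ρ) (hxy : x ≤ y) : ρ x ≤ ρ y := by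
  simpa [h.map_sub] using (h.2.2 (y - x) (sub_nonneg.2 hxy)).1

theorem IsBandProj.map_le_of_fragment {E : Type*} [Lattice E] [AddCommGroup E]
    {R T S : E → F} (h : IsBandProj ρ) (hR : OrthAdd R) (hRT : ∀ x, R x ≤ T x)
    (hRS : ∀ x, R x ≤ S x) {z e : E} (hz : Fragment z e) :
    ρ (R e) ≤ ρ (T z) + ρ (S (e - z)) := by
  have hRe : R e = R z + R (e - z) := by rw [← hR z (e - z) hz, add_sub_cancel]
  rw [hRe, h.1]
  exact add_le_add (h.mono (hRT z)) (h.mono (hRS (e - z)))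

theorem le_of_forall_map_le {ι : Type*} {ρ : ι → F → F} (hρ : ∀ α, IsBandProj (ρ α))
    (hlub : ∀ x : F, 0 ≤ x → IsLUB (Set.range fun α => ρ α x) x) (h : ∀ α, ρ α x ≤ y) :
    x ≤ y := by
  have hx : x⁺ - x ≥ 0 := sub_nonneg.2 (le_posPart x)
  have hub : x⁺ ≤ y + (x⁺ - x) := (hlub x⁺ (posPart_nonneg x)).2 <| by
    rintro _ ⟨α, rfl⟩
    calc ρ α x⁺ = ρ α x + ρ α (x⁺ - x) := by rw [← (hρ α).1, add_sub_cancel]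
      _ ≤ y + (x⁺ - x) := add_le_add (h α) ((hρ α).2.2 _ hx).2
  rwa [add_sub, le_sub_iff_add_le, add_comm x⁺ x, add_le_add_iff_right] at hub

end IsBandProj

section BandProj

variable {F : Type*} [ConditionallyCompleteLattice F] [AddCommGroup F] [IsOrderedAddMonoid F]
  {b c d g u x y : F}

theorem bandProj_of_nonneg (hb : 0 ≤ b) (hx : 0 ≤ x) : bandProj b x = bandProjPos b x := by
  rw [bandProj, posPart_eq_self.2 hx, negPart_eq_zero.2 hx,
    bandProjPos_eq_zero (inf_eq_left.2 hb), sub_zero]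

theorem bandProj_sub_of_nonneg {p q : F} (hb : 0 ≤ b) (hp : 0 ≤ p) (hq : 0 ≤ q) :
    bandProj b (p - q) = bandProjPos b p - bandProjPos b q := by
  have h : (p - q)⁺ + q = p + (p - q)⁻ := by
    rw [← sub_eq_sub_iff_add_eq_add, posPart_sub_negPart]
  have hP := congrArg (bandProjPos b) h
  rw [bandProjPos_add hb (posPart_nonneg _) hq, bandProjPos_add hb hp (negPart_nonneg _)] at hP
  rw [bandProj, sub_eq_sub_iff_add_eq_add, hP]

theorem isBandProj_bandProj (hb : 0 ≤ b) : IsBandProj (bandProj b) := by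
  refine ⟨fun x y => ?_, fun x => ?_, fun x hx => ?_⟩
  · have hxy : x + y = (x⁺ + y⁺) - (x⁻ + y⁻) := by
      conv_lhs => rw [← posPart_sub_negPart x, ← posPart_sub_negPart y]
      abel
    rw [hxy, bandProj_sub_of_nonneg hb (add_nonneg (posPart_nonneg x) (posPart_nonneg y))
      (add_nonneg (negPart_nonneg x) (negPart_nonneg y)),
      bandProjPos_add hb (posPart_nonneg x) (posPart_nonneg y),
      bandProjPos_add hb (negPart_nonneg x) (negPart_nonneg y), bandProj, bandProj]
    abel
  · show bandProj b (bandProjPos b x⁺ - bandProjPos b x⁻) = _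
    rw [bandProj_sub_of_nonneg hb (bandProjPos_nonneg (posPart_nonneg x))
      (bandProjPos_nonneg (negPart_nonneg x)), bandProjPos_idem, bandProjPos_idem, bandProj]
  · rw [bandProj_of_nonneg hb hx]
    exact ⟨bandProjPos_nonneg hx, bandProjPos_le b x⟩

theorem bandProj_le_of_posPart_sub_inf_eq_zero (hc : 0 ≤ c) (hu : 0 ≤ u)
    (h : (g - u)⁺ ⊓ c = 0) : bandProj c g ≤ u := by
  have hg : bandProj c g = bandProj c u + bandProj c (g - u) := by
    rw [← (isBandProj_bandProj hc).1, add_sub_cancel]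
  have hgu : bandProj c (g - u) ≤ 0 := by
    rw [bandProj, bandProjPos_eq_zero h, zero_sub, neg_nonpos]
    exact bandProjPos_nonneg (negPart_nonneg _)
  rw [hg, bandProj_of_nonneg hc hu]
  simpa using add_le_add (bandProjPos_le c u) hgu

theorem bandProj_le_bandProj_of_bandProjPos_posPart_sub_eq (hc : 0 ≤ c)
    (h : bandProjPos (g - u)⁺ c = c) : bandProj c u ≤ bandProj c g := by
  have hneg : (g - u)⁻ ⊓ c = 0 :=
    inf_eq_zero_of_bandProjPos_eq hc (inf_comm (g - u)⁺ _ ▸ posPart_inf_negPart_eq_zero _) h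
  rw [← sub_nonneg, ← (isBandProj_bandProj hc).map_sub, bandProj, bandProjPos_eq_zero hneg,
    sub_zero]
  exact bandProjPos_nonneg (posPart_nonneg _)

theorem bandProj_sub_bandProjPos_le {w : F} (hw : (g - u)⁺ ≤ w) (hu : 0 ≤ u) :
    bandProj (d - bandProjPos w d) g ≤ u := by
  have hc : 0 ≤ d - bandProjPos w d := sub_nonneg.2 (bandProjPos_le w d)
  refine bandProj_le_of_posPart_sub_inf_eq_zero hc hu ?_
  have hcw : (d - bandProjPos w d) ⊓ w = 0 :=
    sub_bandProjPos_inf_eq_zero ((posPart_nonneg _).trans hw)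
  exact inf_eq_zero_of_le (inf_comm _ w ▸ hcw) hw le_rfl (posPart_nonneg _) hc

theorem isLUB_range_bandProj {M : Set F} (hM : ∀ c ∈ M, 0 ≤ c)
    (hperp : ∀ d, 0 ≤ d → (∀ c ∈ M, d ⊓ c = 0) → d = 0) (hx : 0 ≤ x) :
    IsLUB (Set.range fun c : M => bandProj (c : F) x) x := by
  refine ⟨?_, fun w hw => ?_⟩
  · rintro _ ⟨c, rfl⟩
    show bandProj (c : F) x ≤ x
    rw [bandProj_of_nonneg (hM c c.2) hx]
    exact bandProjPos_le _ _
  · have hPw : ∀ c ∈ M, bandProjPos c x ≤ w ⊓ x := fun c hc =>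
      le_inf (bandProj_of_nonneg (hM c hc) hx ▸ hw ⟨⟨c, hc⟩, rfl⟩) (bandProjPos_le c x)
    have hd := hperp (x - w ⊓ x) (sub_nonneg.2 inf_le_right) fun c hc =>
      inf_eq_zero_of_le (sub_bandProjPos_inf_eq_zero (hM c hc)) (sub_le_sub_left (hPw c hc) x)
        le_rfl (sub_nonneg.2 inf_le_right) (hM c hc)
    rw [sub_eq_zero] at hd
    exact hd.le.trans inf_le_left

theorem exists_bandProj_partition (P : F → Prop) (h : ∀ d, 0 < d → ∃ c, 0 < c ∧ c ≤ d ∧ P c) :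
    ∃ M : Set F, (∀ c ∈ M, 0 < c ∧ P c) ∧
      (∀ c c' : M, c ≠ c' → ∀ x, 0 ≤ x → bandProj (c : F) x ⊓ bandProj (c' : F) x = 0) ∧
      ∀ x, 0 ≤ x → IsLUB (Set.range fun c : M => bandProj (c : F) x) x := by
  obtain ⟨M, ⟨hMP, hMdisj⟩, hmax⟩ := zorn_subset
    {M : Set F | (∀ c ∈ M, 0 < c ∧ P c) ∧ M.Pairwise fun a b => a ⊓ b = 0} fun K hK hchain =>
      ⟨⋃₀ K, ⟨fun c ⟨s, hs, hc⟩ => (hK hs).1 c hc, fun a ⟨s, hs, ha⟩ b ⟨t, ht, hb⟩ hab =>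
        (hchain.total hs ht).elim (fun hst => (hK ht).2 (hst ha) hb hab)
          (fun hts => (hK hs).2 ha (hts hb) hab)⟩, fun _ => Set.subset_sUnion_of_mem⟩
  have hperp : ∀ d, 0 ≤ d → (∀ c ∈ M, d ⊓ c = 0) → d = 0 := by
    intro d hd hdM
    by_contra hne
    obtain ⟨c, hc, hcd, hPc⟩ := h d (hd.lt_of_ne' hne)
    have hcM : ∀ c' ∈ M, c ⊓ c' = 0 := fun c' hc' =>
      inf_eq_zero_of_le (hdM c' hc') hcd le_rfl hc.le (hMP c' hc').1.le
    have hnotin : c ∉ M := fun hin => hc.ne' (by simpa using hcM c hin)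
    refine hnotin (hmax ⟨?_, ?_⟩ (Set.subset_insert c M) (Set.mem_insert c M))
    · rintro c' (rfl | hc')
      exacts [⟨hc, hPc⟩, hMP c' hc']
    · exact hMdisj.insert fun c' hc' _ => ⟨hcM c' hc', inf_comm c c' ▸ hcM c' hc'⟩
  refine ⟨M, hMP, fun c c' hne x hx => ?_, fun x hx =>
    isLUB_range_bandProj (fun c hc => (hMP c hc).1.le) hperp hx⟩
  rw [bandProj_of_nonneg (hMP c c.2).1.le hx, bandProj_of_nonneg (hMP c' c'.2).1.le hx]
  exact bandProjPos_inf_bandProjPos_eq_zero (hMdisj c.2 c'.2 (Subtype.coe_ne_coe.2 hne)) hx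

end BandProj

section RealModule

variable {F : Type*} [ConditionallyCompleteLattice F] [AddCommGroup F] [IsOrderedAddMonoid F]
  [Module ℝ F] [PosSMulMono ℝ F] {b c d u x : F} {ε : ℝ}

theorem nonpos_of_forall_le_smul (hu : 0 ≤ u) (h : ∀ ε : ℝ, 0 < ε → x ≤ ε • u) : x ≤ 0 := by
  refine nonpos_of_forall_nsmul_le (y := u) fun n => ?_
  rcases n.eq_zero_or_pos with rfl | hn
  · rwa [zero_smul]
  · have hn' : (0 : ℝ) < n := Nat.cast_pos.2 hn
    rw [← Nat.cast_smul_eq_nsmul ℝ, ← le_inv_smul_iff_of_pos hn']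
    exact h _ (inv_pos.2 hn')

theorem smul_bandProjPos_le (hε : 0 < ε) (hb : 0 ≤ b) (x : F) :
    ε • bandProjPos b x ≤ bandProjPos b (ε • x) := by
  rw [← le_inv_smul_iff_of_pos hε]
  refine ciSup_le fun n => (le_inv_smul_iff_of_pos hε).2 ?_
  refine (le_inf (smul_le_smul_of_nonneg_left inf_le_left hε.le) ?_).trans
    (inf_nsmul_le_bandProjPos b _ ⌈ε * n⌉₊)
  calc ε • (x ⊓ n • b) ≤ ε • (n • b) := smul_le_smul_of_nonneg_left inf_le_right hε.le
    _ = (ε * n) • b := by rw [mul_smul, Nat.cast_smul_eq_nsmul]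
    _ ≤ (⌈ε * n⌉₊ : ℝ) • b := smul_le_smul_of_nonneg_right (Nat.le_ceil _) hb
    _ = ⌈ε * n⌉₊ • b := Nat.cast_smul_eq_nsmul ℝ _ _

theorem smul_bandProjPos_le_bandProjPos {A a : F} (hε : 0 < ε) (hc : 0 ≤ c) (hA : 0 ≤ A)
    (ha : 0 ≤ a) (h : bandProjPos (a - ε • A)⁺ c = c) :
    ε • bandProjPos c A ≤ bandProjPos c a :=
  calc ε • bandProjPos c A ≤ bandProjPos c (ε • A) := smul_bandProjPos_le hε hc A
    _ = bandProj c (ε • A) := (bandProj_of_nonneg hc (smul_nonneg hε.le hA)).symm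
    _ ≤ bandProj c a := bandProj_le_bandProj_of_bandProjPos_posPart_sub_eq hc h
    _ = bandProjPos c a := bandProj_of_nonneg hc ha

theorem smul_bandProjPos_inf_le_add {A B a b : F} (hε : 0 < ε) (hd : 0 ≤ d) (hA : 0 ≤ A)
    (hB : 0 ≤ B) (ha : 0 ≤ a) (hb : 0 ≤ b)
    (h : bandProjPos ((a - ε • A)⁺ ⊔ (b - ε • B)⁺) d = d) :
    ε • bandProjPos d (A ⊓ B) ≤ a + b := by
  obtain ⟨d₁, d₂, hd₁, hd₂, rfl, h₁, h₂⟩ :=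
    exists_add_of_bandProjPos_sup_eq (posPart_nonneg _) (posPart_nonneg _) hd h
  calc ε • bandProjPos (d₁ + d₂) (A ⊓ B) ≤ ε • bandProjPos d₁ A + ε • bandProjPos d₂ B := by
        rw [← smul_add]
        refine smul_le_smul_of_nonneg_left ((bandProjPos_add_le (le_inf hA hB) hd₁ hd₂).trans
          (add_le_add ?_ ?_)) hε.le
        exacts [bandProjPos_mono_right inf_le_left, bandProjPos_mono_right inf_le_right]
    _ ≤ bandProjPos d₁ a + bandProjPos d₂ b := add_le_add
        (smul_bandProjPos_le_bandProjPos hε hd₁ hA ha h₁)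
        (smul_bandProjPos_le_bandProjPos hε hd₂ hB hb h₂)
    _ ≤ a + b := add_le_add (bandProjPos_le _ _) (bandProjPos_le _ _)

end RealModule

section FragmentInf

variable {E F : Type*} [Lattice E] [AddCommGroup E] [ConditionallyCompleteLattice F]
  [AddCommGroup F] {T S : E → F}

/-- The value at `x` of the infimum `T ⊓ S` in `U(E,F)`. -/
noncomputable def fragmentInf (T S : E → F) (x : E) : F :=
  ⨅ z : {z // Fragment z x}, T z + S (x - z)

theorem fragmentInf_le [IsOrderedAddMonoid F] (hT : ∀ x, 0 ≤ T x) (hS : ∀ x, 0 ≤ S x)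
    {x z : E} (hz : Fragment z x) : fragmentInf T S x ≤ T z + S (x - z) :=
  ciInf_le ⟨0, by rintro _ ⟨w, rfl⟩; exact add_nonneg (hT _) (hS _)⟩
    (⟨z, hz⟩ : {z // Fragment z x})

variable [IsOrderedAddMonoid E]

instance (x : E) : Nonempty {z // Fragment z x} := ⟨⟨x, fragment_self x⟩⟩

theorem le_fragmentInf {c : F} {x : E} (h : ∀ z, Fragment z x → c ≤ T z + S (x - z)) :
    c ≤ fragmentInf T S x :=
  le_ciInf fun z => h z.1 z.2

variable [IsOrderedAddMonoid F]

theorem orthAdd_fragmentInf (hT : OrthAdd T) (hS : OrthAdd S) (hTpos : ∀ x, 0 ≤ T x)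
    (hSpos : ∀ x, 0 ≤ S x) : OrthAdd (fragmentInf T S) := by
  intro x y hxy
  have hsplit : ∀ z₁ z₂, Fragment z₁ x → Fragment z₂ y →
      T (z₁ + z₂) + S (x + y - (z₁ + z₂)) = (T z₁ + S (x - z₁)) + (T z₂ + S (y - z₂)) := by
    intro z₁ z₂ h₁ h₂
    obtain ⟨hz, hxz⟩ := Fragment.abs_inf_abs_eq_zero hxy h₁ h₂
    rw [hT _ _ hz, show x + y - (z₁ + z₂) = (x - z₁) + (y - z₂) by abel, hS _ _ hxz]
    abel
  refine le_antisymm (le_ciInf_add_ciInf fun z₁ z₂ => ?_) (le_fragmentInf fun z hz => ?_)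
  · exact (hsplit z₁ z₂ z₁.2 z₂.2) ▸ fragmentInf_le hTpos hSpos (z₁.2.add hxy z₂.2)
  · obtain ⟨z₁, z₂, h₁, h₂, rfl⟩ := hz.exists_add hxy
    exact (hsplit z₁ z₂ h₁ h₂) ▸
      add_le_add (fragmentInf_le hTpos hSpos h₁) (fragmentInf_le hTpos hSpos h₂)

theorem fragmentInf_nonpos (hT : Uryson T) (hS : OrthAdd S) (hTpos : ∀ x, 0 ≤ T x)
    (hSpos : ∀ x, 0 ≤ S x) (hTS : UDisjointPos T S) (x : E) : fragmentInf T S x ≤ 0 := by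
  have hRT : ∀ x, fragmentInf T S x ≤ T x := fun x => by
    simpa [hS.map_zero] using fragmentInf_le hTpos hSpos (fragment_self x)
  have hRS : ∀ x, fragmentInf T S x ≤ S x := fun x => by
    simpa [hT.1.map_zero] using fragmentInf_le hTpos hSpos (fragment_zero x)
  have hbdd : OrderBoundedMap (fragmentInf T S) := fun a b => by
    obtain ⟨_, d, hd⟩ := hT.2 a b
    exact ⟨0, d, fun x hx => ⟨le_fragmentInf fun z _ => add_nonneg (hTpos z) (hSpos _),
      (hRT x).trans (hd x hx).2⟩⟩
  exact hTS _ ⟨orthAdd_fragmentInf hT.1 hS hTpos hSpos, hbdd⟩ hRT hRS x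

variable [Module ℝ F] [PosSMulMono ℝ F] {e : E} {ε : ℝ} {d : F}

theorem eq_zero_of_forall_fragment_bandProjPos_eq (hT0 : T 0 = 0) (hS0 : S 0 = 0)
    (hTpos : ∀ x, 0 ≤ T x) (hSpos : ∀ x, 0 ≤ S x) (he : fragmentInf T S e ≤ 0) (hε : 0 < ε)
    (hd : 0 ≤ d)
    (h : ∀ z, Fragment z e → bandProjPos ((T z - ε • T e)⁺ ⊔ (S (e - z) - ε • S e)⁺) d = d) :
    d = 0 := by
  have hεT := smul_nonneg hε.le (hTpos e)
  have hεS := smul_nonneg hε.le (hSpos e)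
  have hTe : bandProjPos (T e) d = d := by
    refine bandProjPos_eq_self_of_le_left (sup_le (sup_le (sub_le_self _ hεT) (hTpos e))
      (sup_le ?_ (hTpos e))) (h e (fragment_self e))
    rw [sub_self, hS0, zero_sub]
    exact (neg_nonpos.2 hεS).trans (hTpos e)
  have hSe : bandProjPos (S e) d = d := by
    refine bandProjPos_eq_self_of_le_left (sup_le (sup_le ?_ (hSpos e))
      (sup_le (by rw [sub_zero]; exact sub_le_self _ hεS) (hSpos e))) (h 0 (fragment_zero e))
    rw [hT0, zero_sub]
    exact (neg_nonpos.2 hεT).trans (hSpos e)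
  have hsmall : ε • bandProjPos d (T e ⊓ S e) ≤ 0 :=
    (le_fragmentInf fun z hz => smul_bandProjPos_inf_le_add hε hd (hTpos e) (hSpos e) (hTpos z)
      (hSpos _) (h z hz)).trans he
  have hperp : d ⊓ (T e ⊓ S e) = 0 := by
    refine le_antisymm ?_ (le_inf hd (le_inf (hTpos e) (hSpos e)))
    calc d ⊓ (T e ⊓ S e) = (T e ⊓ S e) ⊓ 1 • d := by rw [one_smul, inf_comm]
      _ ≤ bandProjPos d (T e ⊓ S e) := inf_nsmul_le_bandProjPos _ _ 1
      _ ≤ 0 := by rwa [← le_inv_smul_iff_of_pos hε, smul_zero] at hsmall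
  exact eq_zero_of_inf_inf_eq_zero hd hTe hSe hperp

theorem exists_fragment_bandProj_le (hT0 : T 0 = 0) (hS0 : S 0 = 0) (hTpos : ∀ x, 0 ≤ T x)
    (hSpos : ∀ x, 0 ≤ S x) (he : fragmentInf T S e ≤ 0) (hε : 0 < ε) (hd : 0 < d) :
    ∃ c, 0 < c ∧ c ≤ d ∧
      ∃ z, Fragment z e ∧ bandProj c (T z) ≤ ε • T e ∧ bandProj c (S (e - z)) ≤ ε • S e := by
  obtain ⟨z, hz, hne⟩ : ∃ z, Fragment z e ∧
      bandProjPos ((T z - ε • T e)⁺ ⊔ (S (e - z) - ε • S e)⁺) d ≠ d := by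
    by_contra! h
    exact hd.ne' (eq_zero_of_forall_fragment_bandProjPos_eq hT0 hS0 hTpos hSpos he hε hd.le h)
  exact ⟨_, sub_pos.2 ((bandProjPos_le _ d).lt_of_ne hne),
    sub_le_self _ (bandProjPos_nonneg hd.le), z, hz,
    bandProj_sub_bandProjPos_le le_sup_left (smul_nonneg hε.le (hTpos e)),
    bandProj_sub_bandProjPos_le le_sup_right (smul_nonneg hε.le (hSpos e))⟩

end FragmentInf

theorem stmt6_general {E F : Type} [Lattice E] [AddCommGroup E]
    [CovariantClass E E (· + ·) (· ≤ ·)]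
    [ConditionallyCompleteLattice F] [AddCommGroup F]
    [CovariantClass F F (· + ·) (· ≤ ·)] [Module ℝ F] [PosSMulMono ℝ F]
    (T S : E → F) (hT : Uryson T) (hTpos : ∀ x, 0 ≤ T x)
    (hS : Uryson S) (hSpos : ∀ x, 0 ≤ S x) :
    UDisjointPos T S ↔
      ∀ e : E, ∀ ε : ℝ, 0 < ε →
        ∃ (ι : Type) (ρ : ι → F → F) (ea : ι → E),
          (∀ α, IsBandProj (ρ α)) ∧
          (∀ α β, α ≠ β → ∀ x : F, 0 ≤ x → ρ α x ⊓ ρ β x = 0) ∧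
          (∀ x : F, 0 ≤ x → IsLUB (Set.range fun α => ρ α x) x) ∧
          (∀ α, Fragment (ea α) e) ∧
          ∀ α, ρ α (T (ea α)) ≤ ε • T e ∧ ρ α (S (e - ea α)) ≤ ε • S e := by
  have : IsOrderedAddMonoid E := { add_le_add_left := fun _ _ h c => add_le_add_left h c }
  have : IsOrderedAddMonoid F := { add_le_add_left := fun _ _ h c => add_le_add_left h c }
  constructor
  · intro hTS e ε hε
    obtain ⟨M, hM, hdisj, hlub⟩ := exists_bandProj_partition _ fun d hd =>
      exists_fragment_bandProj_le hT.1.map_zero hS.1.map_zero hTpos hSpos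
        (fragmentInf_nonpos hT hS.1 hTpos hSpos hTS e) hε hd
    choose ea hea using fun c : M => (hM c c.2).2
    exact ⟨M, fun c => bandProj c, ea, fun c => isBandProj_bandProj (hM c c.2).1.le, hdisj,
      hlub, fun c => (hea c).1, fun c => (hea c).2⟩
  · intro h R hR hRT hRS x
    refine nonpos_of_forall_le_smul (add_nonneg (hTpos x) (hSpos x)) fun ε hε => ?_
    obtain ⟨ι, ρ, ea, hρ, -, hlub, hfrag, hsmall⟩ := h x ε hε
    refine le_of_forall_map_le hρ hlub fun α => ?_
    rw [smul_add]
    exact ((hρ α).map_le_of_fragment hR.1 hRT hRS (hfrag α)).trans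
      (add_le_add (hsmall α).1 (hsmall α).2)

/-- Two positive abstract Uryson operators `T, S : E → F` (`F` Dedekind complete) are
disjoint iff for every `e ∈ E` and `ε > 0` there are a partition of unity `(ρ α)`
(a family of pairwise disjoint band projections on `F` with supremum the identity)
and a family `(e α)` of fragments of `e` with `ρ α (T (e α)) ≤ ε • T e` and
`ρ α (S (e - e α)) ≤ ε • S e` for every `α`. -/
theorem stmt6 {E F : Type} [Lattice E] [AddCommGroup E]
    [CovariantClass E E (· + ·) (· ≤ ·)] [Module ℝ E]
    [ConditionallyCompleteLattice F] [AddCommGroup F]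
    [CovariantClass F F (· + ·) (· ≤ ·)] [Module ℝ F] [PosSMulMono ℝ F]
    (T S : E → F) (hT : Uryson T) (hTpos : ∀ x, 0 ≤ T x)
    (hS : Uryson S) (hSpos : ∀ x, 0 ≤ S x) :
    UDisjointPos T S ↔
      ∀ e : E, ∀ ε : ℝ, 0 < ε →
        ∃ (ι : Type) (ρ : ι → F → F) (ea : ι → E),
          (∀ α, IsBandProj (ρ α)) ∧
          (∀ α β, α ≠ β → ∀ x : F, 0 ≤ x → ρ α x ⊓ ρ β x = 0) ∧
          (∀ x : F, 0 ≤ x → IsLUB (Set.range fun α => ρ α x) x) ∧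
          (∀ α, Fragment (ea α) e) ∧
          ∀ α, ρ α (T (ea α)) ≤ ε • T e ∧ ρ α (S (e - ea α)) ≤ ε • S e :=
  stmt6_general T S hT hTpos hS hSpos
end

section
/- Let E, F be vector lattices with F Dedekind complete and T : E → F a positive abstract Uryson operator. Then the null set N_T = { e ∈ E : Te = 0 } is an admissible set. -/
/-- A subset `D` of a vector lattice is admissible if it contains every fragment of each
of its elements and is closed under sums of disjoint pairs of its elements. -/
def Admissible {E : Type*} [Lattice E] [AddCommGroup E] (D : Set E) : Prop :=
  (∀ x ∈ D, ∀ y : E, Fragment y x → y ∈ D) ∧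
    ∀ x ∈ D, ∀ y ∈ D, |x| ⊓ |y| = 0 → x + y ∈ D

section NullSet

variable {E F : Type*} [Lattice E] [AddCommGroup E] [AddCommGroup F] {T : E → F}

theorem OrthAdd.apply_eq_add_apply_sub (hT : OrthAdd T) {x y : E} (h : Fragment y x) :
    T x = T y + T (x - y) := by
  simpa using hT y (x - y) h

theorem OrthAdd.apply_eq_zero_of_fragment [PartialOrder F]
    [CovariantClass F F (· + ·) (· ≤ ·)] (hT : OrthAdd T) (hpos : ∀ x, 0 ≤ T x) {x y : E}
    (hx : T x = 0) (h : Fragment y x) : T y = 0 :=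
  le_antisymm
    (calc T y ≤ T y + T (x - y) := le_add_of_nonneg_right (hpos _)
      _ = 0 := by rw [← hT.apply_eq_add_apply_sub h, hx])
    (hpos y)

theorem OrthAdd.admissible_setOf_apply_eq_zero [PartialOrder F]
    [CovariantClass F F (· + ·) (· ≤ ·)] (hT : OrthAdd T) (hpos : ∀ x, 0 ≤ T x) :
    Admissible {e : E | T e = 0} :=
  ⟨fun _ hx _ h => hT.apply_eq_zero_of_fragment hpos hx h,
    fun x hx y hy hxy => (hT x y hxy).trans <| by
      rw [show T x = 0 from hx, show T y = 0 from hy, add_zero]⟩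

end NullSet

theorem stmt12_general {E F : Type*} [Lattice E] [AddCommGroup E]
    [ConditionallyCompleteLattice F] [AddCommGroup F]
    [CovariantClass F F (· + ·) (· ≤ ·)]
    (T : E → F) (hT : Uryson T) (hTpos : ∀ x, 0 ≤ T x) :
    Admissible {e : E | T e = 0} :=
  hT.1.admissible_setOf_apply_eq_zero hTpos

/-- For a positive abstract Uryson operator `T : E → F` (`F` Dedekind complete), the null
set `N_T = { e : T e = 0 }` is admissible. -/
theorem stmt12 {E F : Type*} [Lattice E] [AddCommGroup E]
    [CovariantClass E E (· + ·) (· ≤ ·)] [Module ℝ E]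
    [ConditionallyCompleteLattice F] [AddCommGroup F]
    [CovariantClass F F (· + ·) (· ≤ ·)] [Module ℝ F]
    (T : E → F) (hT : Uryson T) (hTpos : ∀ x, 0 ≤ T x) :
    Admissible {e : E | T e = 0} :=
  stmt12_general T hT hTpos
end
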